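/- Let g be a Lorentzian symmetric bilinear form of signature (+,-,...,-) on V, let T ∈ V be timelike (g(T,T) > 0), and write a vector w ∈ V in a basis (f₀, T, f₂, ..., f_{n-1}) as w = w⁰f₀ + w¹T + Σⱼ wʲfⱼ, where g(f₀,f₀) = 0, g(fᵢ,fⱼ) = -δᵢⱼ and g(f₀,fⱼ) = 0 for i,j ≥ 2. Then w is timelike if and only if g(T,T)·(w¹)² + 2w¹·(g(T,f₀)w⁰ + Σⱼ g(T,fⱼ)wʲ) - Σⱼ (wʲ)² > 0, and the two connected components of the timelike cone are distinguished by w¹ > 0 and w¹ < 0 among timelike vectors with this property, i.e. every timelike w has w¹ ≠ 0 and w is in the component of T iff w¹ > 0. -/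

import Mathlib

/-!
Write `w = w¹ T + u` with `u` in the span of `f₀` and the `fⱼ`. On that span `g` is
`-Σⱼ (uʲ)²`, since `f₀` is null and orthogonal to the `fⱼ`; expanding `g(w, w)` gives the
quadratic expression, and a vector with `w¹ = 0` is not timelike. So `w¹` does not vanish on
the timelike cone and, by the intermediate value theorem, has constant sign on each of its
components. Conversely, if `w` is timelike with `w¹ > 0`, then
`2 w¹ g(T, w) = (w¹)² g(T, T) + g(w, w) - g(u, u) > 0`, and a segment between two timelike
vectors `x, y` with `g(x, y) ≥ 0` stays timelike, so the segment from `T` to `w` joins them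
inside the cone.
-/

open Finset

theorem pos_of_mem_connectedComponentIn {X : Type*} [TopologicalSpace X] {C : Set X}
    {φ : X → ℝ} (hφ : Continuous φ) (hC : ∀ u ∈ C, φ u ≠ 0) {x y : X} (hx : 0 < φ x)
    (hy : y ∈ connectedComponentIn C x) : 0 < φ y := by
  by_contra! hle
  have hxC : x ∈ C := connectedComponentIn_nonempty_iff.mp ⟨y, hy⟩
  obtain ⟨u, hu, hu0⟩ := isPreconnected_connectedComponentIn.intermediate_value hy
    (mem_connectedComponentIn hxC) hφ.continuousOn ⟨hle, hx.le⟩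
  exact hC u (connectedComponentIn_subset _ _ hu) hu0

theorem sum_univ_eq_add_add_sum_of_mem_iff {ι M : Type*} [Fintype ι] [DecidableEq ι]
    [AddCommMonoid M] (F : ι → M) {o t : ι} {S : Finset ι} (hot : o ≠ t)
    (hS : ∀ j, j ∈ S ↔ j ≠ o ∧ j ≠ t) : ∑ i, F i = F o + F t + ∑ j ∈ S, F j := by
  have huniv : (univ : Finset ι) = insert o (insert t S) := by
    ext j
    simp only [mem_univ, mem_insert, hS, true_iff]
    tauto
  rw [huniv, sum_insert (by simp [hS, hot]), sum_insert (by simp [hS]), add_assoc]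

section SymmetricForm

variable {V : Type*} [AddCommGroup V] [Module ℝ V] {g : V →ₗ[ℝ] V →ₗ[ℝ] ℝ}

theorem apply_add_self_of_symm (hsymm : ∀ x y : V, g x y = g y x) (x y : V) :
    g (x + y) (x + y) = g x x + 2 * g x y + g y y := by
  simp only [map_add, LinearMap.add_apply, hsymm y x]
  ring

/-- A reverse Cauchy–Schwarz inequality. -/
theorem apply_pos_of_apply_sub_smul_nonpos (hsymm : ∀ x y : V, g x y = g y x) {T w : V}
    {c : ℝ} (hc : 0 < c) (hT : 0 < g T T) (hw : 0 < g w w)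
    (hu : g (w - c • T) (w - c • T) ≤ 0) : 0 < g T w := by
  set u := w - c • T
  have hwu : w = c • T + u := by simp [u]
  have hww : g w w = c ^ 2 * g T T + 2 * c * g T u + g u u := by
    rw [hwu, apply_add_self_of_symm hsymm]
    simp only [map_smul, LinearMap.smul_apply, smul_eq_mul]
    ring
  have hTw : g T w = c * g T T + g T u := by
    rw [hwu]
    simp only [map_add, map_smul, smul_eq_mul]
  have h2cTw : 0 < 2 * c * g T w := by
    rw [hTw]
    nlinarith [mul_pos (pow_pos hc 2) hT]
  exact pos_of_mul_pos_right h2cTw (by positivity)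

theorem segment_subset_setOf_apply_self_pos (hsymm : ∀ x y : V, g x y = g y x) {x y : V}
    (hx : 0 < g x x) (hy : 0 < g y y) (hxy : 0 ≤ g x y) :
    segment ℝ x y ⊆ {u | 0 < g u u} := by
  rintro _ ⟨a, e, ha, he, hae, rfl⟩
  rw [Set.mem_ofPred_eq, apply_add_self_of_symm hsymm]
  simp only [map_smul, LinearMap.smul_apply, smul_eq_mul]
  rcases ha.eq_or_lt with rfl | ha
  · rw [zero_add] at hae
    subst hae
    simpa using hy
  · nlinarith [mul_pos (mul_pos ha ha) hx, mul_nonneg (mul_nonneg ha.le he) hxy,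
      mul_nonneg (mul_nonneg he he) hy.le]

theorem apply_sum_smul_self_of_pairwise {ι : Type*} [DecidableEq ι] (f : ι → V)
    (S : Finset ι) (c : ι → ℝ)
    (hS : ∀ i ∈ S, ∀ j ∈ S, g (f i) (f j) = if i = j then -1 else 0) :
    g (∑ j ∈ S, c j • f j) (∑ j ∈ S, c j • f j) = -∑ j ∈ S, c j ^ 2 := by
  simp only [map_sum, map_smul, LinearMap.sum_apply, LinearMap.smul_apply, smul_eq_mul]
  rw [← sum_neg_distrib]
  refine sum_congr rfl fun i hi => ?_
  rw [sum_congr rfl fun j hj => by rw [hS j hj i hi]]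
  simp only [mul_ite, mul_neg, mul_one, mul_zero, sum_ite_eq', hi, ↓reduceIte]
  ring

theorem apply_self_eq_of_adapted_basis {ι : Type*} [Fintype ι] [DecidableEq ι]
    (hsymm : ∀ x y : V, g x y = g y x) (b : Module.Basis ι ℝ V) {o t : ι} {S : Finset ι}
    (hot : o ≠ t) (hS : ∀ j, j ∈ S ↔ j ≠ o ∧ j ≠ t) (h00 : g (b o) (b o) = 0)
    (h0j : ∀ j ∈ S, g (b o) (b j) = 0)
    (hij : ∀ i ∈ S, ∀ j ∈ S, g (b i) (b j) = if i = j then -1 else 0) (w : V) :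
    g w w = g (b t) (b t) * b.repr w t ^ 2 +
      2 * b.repr w t * (g (b t) (b o) * b.repr w o + ∑ j ∈ S, g (b t) (b j) * b.repr w j) -
      ∑ j ∈ S, b.repr w j ^ 2 := by
  set c := b.repr w
  set v := ∑ j ∈ S, c j • b j
  have hw : w = c t • b t + (c o • b o + v) := by
    conv_lhs => rw [← b.sum_repr w]
    rw [sum_univ_eq_add_add_sum_of_mem_iff _ hot hS]
    abel
  have hov : g (b o) v = 0 := by
    simp only [v, map_sum, map_smul, smul_eq_mul]
    exact sum_eq_zero fun j hj => by rw [h0j j hj, mul_zero]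
  have htv : g (b t) v = ∑ j ∈ S, g (b t) (b j) * c j := by
    simp only [v, map_sum, map_smul, smul_eq_mul, mul_comm]
  rw [hw, apply_add_self_of_symm hsymm, apply_add_self_of_symm hsymm,
    apply_sum_smul_self_of_pairwise b S c hij]
  simp only [map_add, map_smul, LinearMap.smul_apply, smul_eq_mul, h00,
    hov, htv]
  ring

theorem apply_self_nonpos_of_repr_eq_zero {ι : Type*} [Fintype ι] [DecidableEq ι]
    (hsymm : ∀ x y : V, g x y = g y x) (b : Module.Basis ι ℝ V) {o t : ι} {S : Finset ι}
    (hot : o ≠ t) (hS : ∀ j, j ∈ S ↔ j ≠ o ∧ j ≠ t) (h00 : g (b o) (b o) = 0)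
    (h0j : ∀ j ∈ S, g (b o) (b j) = 0)
    (hij : ∀ i ∈ S, ∀ j ∈ S, g (b i) (b j) = if i = j then -1 else 0) {w : V}
    (hw : b.repr w t = 0) : g w w ≤ 0 := by
  rw [apply_self_eq_of_adapted_basis hsymm b hot hS h00 h0j hij w, hw]
  nlinarith [sum_nonneg fun j (_ : j ∈ S) => sq_nonneg (b.repr w j)]

end SymmetricForm

/-- In a basis `(f₀, T, f₂, …, f_{n-1})` with `f₀` null, `T`
timelike, and `f₂, …, f_{n-1}` orthonormal spacelike and `g`-orthogonal to
`f₀`, a vector `w` is timelike iff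
`g(T,T)(w¹)² + 2w¹(g(T,f₀)w⁰ + Σⱼ g(T,fⱼ)wʲ) - Σⱼ(wʲ)² > 0`, every timelike `w`
has `w¹ ≠ 0`, and `w` is in the component of `T` iff `w¹ > 0`. -/
theorem timelike_cone_adapted_frame_characterization
    {n : ℕ} (hn : 2 ≤ n) {V : Type*} [NormedAddCommGroup V] [NormedSpace ℝ V]
    [FiniteDimensional ℝ V]
    (g : V →ₗ[ℝ] V →ₗ[ℝ] ℝ) (hsymm : ∀ x y : V, g x y = g y x)
    (b : Module.Basis (Fin n) ℝ V)
    (hT : 0 < g (b ⟨1, by omega⟩) (b ⟨1, by omega⟩))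
    (h00 : g (b ⟨0, by omega⟩) (b ⟨0, by omega⟩) = 0)
    (h0j : ∀ j : Fin n, 2 ≤ (j : ℕ) → g (b ⟨0, by omega⟩) (b j) = 0)
    (hij : ∀ i j : Fin n, 2 ≤ (i : ℕ) → 2 ≤ (j : ℕ) →
      g (b i) (b j) = if i = j then -1 else 0) :
    ∀ w : V,
      (0 < g w w ↔
        0 < g (b ⟨1, by omega⟩) (b ⟨1, by omega⟩) * (b.repr w ⟨1, by omega⟩) ^ 2 +
          2 * (b.repr w ⟨1, by omega⟩) *
            (g (b ⟨1, by omega⟩) (b ⟨0, by omega⟩) * b.repr w ⟨0, by omega⟩ +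
              ∑ j ∈ Finset.univ.filter (fun j : Fin n => 2 ≤ (j : ℕ)),
                g (b ⟨1, by omega⟩) (b j) * b.repr w j) -
          ∑ j ∈ Finset.univ.filter (fun j : Fin n => 2 ≤ (j : ℕ)),
            (b.repr w j) ^ 2) ∧
      (0 < g w w →
        b.repr w ⟨1, by omega⟩ ≠ 0 ∧
          (w ∈ connectedComponentIn {u : V | 0 < g u u} (b ⟨1, by omega⟩) ↔
            0 < b.repr w ⟨1, by omega⟩)) := by
  set o : Fin n := ⟨0, by omega⟩
  set t : Fin n := ⟨1, by omega⟩
  set S := univ.filter fun j : Fin n => 2 ≤ (j : ℕ)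
  have hot : o ≠ t := by simp [o, t, Fin.ext_iff]
  have hS : ∀ j, j ∈ S ↔ j ≠ o ∧ j ≠ t := by
    intro j
    simp only [S, o, t, mem_filter, mem_univ, true_and, ne_eq, Fin.ext_iff]
    omega
  have h0S : ∀ j ∈ S, g (b o) (b j) = 0 := fun j hj => h0j j (mem_filter.mp hj).2
  have hSS : ∀ i ∈ S, ∀ j ∈ S, g (b i) (b j) = if i = j then -1 else 0 :=
    fun i hi j hj => hij i j (mem_filter.mp hi).2 (mem_filter.mp hj).2
  have hnonpos : ∀ {u : V}, b.repr u t = 0 → g u u ≤ 0 :=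
    apply_self_nonpos_of_repr_eq_zero hsymm b hot hS h00 h0S hSS
  have hne : ∀ u ∈ {u : V | 0 < g u u}, b.coord t u ≠ 0 :=
    fun u hu h0 => (hnonpos h0).not_gt hu
  intro w
  refine ⟨by rw [apply_self_eq_of_adapted_basis hsymm b hot hS h00 h0S hSS w],
    fun hw => ⟨hne w hw, fun hmem => ?_, fun hpos => ?_⟩⟩
  · exact pos_of_mem_connectedComponentIn (b.coord t).continuous_of_finiteDimensional hne
      (by simp) hmem
  · have hTw : 0 < g (b t) w :=
      apply_pos_of_apply_sub_smul_nonpos hsymm hpos hT hw (hnonpos (by simp))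
    exact (convex_segment _ _).isPreconnected.subset_connectedComponentIn
      (left_mem_segment ℝ _ _) (segment_subset_setOf_apply_self_pos hsymm hT hw hTw.le)
      (right_mem_segment ℝ _ _)
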